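/- Let T, V ∈ L(H) be trace class, let ρ ∈ ℝ with ρ ≠ 0, and suppose T^#T + ρV^#V is Krein-positive. Then the following are equivalent: (i) for every trace-class B₀ ∈ L(H) there exists X₀ ∈ L(H) such that tr_J((TX₀)^#(TX₀)) + ρ tr_J((VX₀−B₀)^#(VX₀−B₀)) ≤ tr_J((TX)^#(TX)) + ρ tr_J((VX−B₀)^#(VX−B₀)) for every X ∈ L(H); (ii) ran V^# ⊆ ran(T^#T + ρV^#V). -/

import Mathlib

/-!
With `A = T^#T + ρV^#V`, the cost is a quadratic function of `X`: for every direction `Z`,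
`cost (X₀ + Z) = cost X₀ + Σᵢ [A Z eᵢ, Z eᵢ] + 2 Σᵢ [(A X₀ - ρ V^# B₀) eᵢ, Z eᵢ]`,
and the quadratic part is nonnegative because `A` is Krein-positive. Hence a solution of the
normal equation `A X₀ = ρ V^# B₀` is a minimizer, and at a minimizer the linear part vanishes in
every direction. If `ran V^# ⊆ ran A`, Douglas' lemma (via the closed graph theorem) produces a
bounded solution of the normal equation. Conversely, for `B₀ = x ⊗ e` with `e` a basis vector,
testing the linear part against the directions `w ⊗ e` shows that the normal equation holds at
`e`, i.e. `A (ρ⁻¹ X₀ e) = V^# x`.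
-/

open ContinuousLinearMap

noncomputable section

variable {H : Type*} [NormedAddCommGroup H] [InnerProductSpace ℂ H] [CompleteSpace H]

/-- The Krein adjoint `S^# = J ∘ S* ∘ J` of `S ∈ L(H)` on a Krein space with signature
operator `J`. -/
def kadj (J S : H →L[ℂ] H) : H →L[ℂ] H :=
  J ∘L (ContinuousLinearMap.adjoint S) ∘L J

/-- An operator `S ∈ L(H)` is Krein-positive: `S^# = S` and `[Sx,x] ≥ 0` for all `x`. -/
def KreinPositive (J S : H →L[ℂ] H) : Prop :=
  kadj J S = S ∧ ∀ x : H, 0 ≤ (inner ℂ (J (S x)) x : ℂ).re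

/-- `S` is a Hilbert–Schmidt operator (w.r.t. the Hilbert basis `b`; this is in fact
independent of the basis). -/
def IsHilbertSchmidt {ι : Type*} (b : HilbertBasis ι ℂ H) (S : H →L[ℂ] H) : Prop :=
  Summable fun i => ‖S (b i)‖ ^ 2

/-- `S` is trace class: it is the product of two Hilbert–Schmidt operators. -/
def IsTraceClass {ι : Type*} (b : HilbertBasis ι ℂ H) (S : H →L[ℂ] H) : Prop :=
  ∃ S₁ S₂ : H →L[ℂ] H, IsHilbertSchmidt b S₁ ∧ IsHilbertSchmidt b S₂ ∧ S = S₁ ∘L S₂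

/-- The `J`-trace `tr_J(S) = tr(J∘S)` of a (trace-class) operator `S`, computed in the
Hilbert basis `b`. -/
def trJ {ι : Type*} (J : H →L[ℂ] H) (b : HilbertBasis ι ℂ H) (S : H →L[ℂ] H) : ℝ :=
  ∑' i, (inner ℂ (J (S (b i))) (b i) : ℂ).re

open InnerProductSpace

theorem ContinuousLinearMap.exists_comp_eq_of_range_le {𝕜 E F G : Type*} [RCLike 𝕜]
    [NormedAddCommGroup E] [InnerProductSpace 𝕜 E] [CompleteSpace E]
    [NormedAddCommGroup F] [NormedSpace 𝕜 F] [CompleteSpace F]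
    [NormedAddCommGroup G] [NormedSpace 𝕜 G]
    (W : E →L[𝕜] G) (C : F →L[𝕜] G)
    (h : LinearMap.range C.toLinearMap ≤ LinearMap.range W.toLinearMap) :
    ∃ X : F →L[𝕜] E, W ∘L X = C := by
  set K := (LinearMap.ker W.toLinearMap)ᗮ
  let W₀ : K →ₗ[𝕜] G := W.toLinearMap ∘ₗ K.subtype
  have hW₀ : LinearMap.ker W₀ = ⊥ := by
    refine LinearMap.ker_eq_bot'.2 fun z hz => ?_
    have hzK : (z : E) ∈ LinearMap.ker W.toLinearMap ⊓ K := ⟨hz, z.2⟩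
    rw [Submodule.inf_orthogonal_eq_bot, Submodule.mem_bot] at hzK
    exact Subtype.ext hzK
  have hrange : ∀ u, C u ∈ LinearMap.range W₀ := by
    intro u
    obtain ⟨y, hy⟩ := h ⟨u, rfl⟩
    refine ⟨⟨y - (LinearMap.ker W.toLinearMap).starProjection y,
      Submodule.sub_starProjection_mem_orthogonal y⟩, ?_⟩
    have : W ((LinearMap.ker W.toLinearMap).starProjection y) = 0 :=
      (LinearMap.ker W.toLinearMap).starProjection_apply_mem y
    simpa [W₀, this] using hy
  -- The unique preimage in `(ker W)ᗮ` depends linearly on `u`; its graph is closed.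
  let g : F →ₗ[𝕜] K := W₀.leftInverse ∘ₗ C.toLinearMap
  have hg : ∀ u, W₀ (g u) = C u := fun u => by
    obtain ⟨z, hz⟩ := hrange u
    simp [g, ← hz, LinearMap.leftInverse_apply_of_inj hW₀]
  have hgraph : IsClosed (g.graph : Set (F × K)) := by
    have : (g.graph : Set (F × K)) = {p | W p.2 = C p.1} := by
      ext p
      simp only [SetLike.mem_coe, LinearMap.mem_graph_iff, Set.mem_ofPred_eq]
      rw [← hg, ← LinearMap.ker_eq_bot.1 hW₀ |>.eq_iff]
      rfl
    rw [this]
    exact isClosed_eq (W.continuous.comp (continuous_subtype_val.comp continuous_snd))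
      (C.continuous.comp continuous_fst)
  exact ⟨K.subtypeL ∘L ofIsClosedGraph hgraph, ext hg⟩

section HilbertSchmidt

variable {ι : Type*}

theorem HilbertBasis.hasSum_norm_inner_sq (b : HilbertBasis ι ℂ H) (x : H) :
    HasSum (fun i => ‖⟪b i, x⟫_ℂ‖ ^ 2) (‖x‖ ^ 2) := by
  simpa [b.repr_apply_apply, b.repr.norm_map] using
    lp.hasSum_norm (p := 2) (by norm_num) (b.repr x)

theorem HilbertBasis.eq_zero_of_isEmpty [IsEmpty ι] (b : HilbertBasis ι ℂ H) (x : H) : x = 0 :=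
  b.repr.injective (Subsingleton.elim _ _)

namespace IsHilbertSchmidt

variable {b : HilbertBasis ι ℂ H} {S S' : H →L[ℂ] H}

theorem clm_comp (hS : IsHilbertSchmidt b S) (X : H →L[ℂ] H) : IsHilbertSchmidt b (X ∘L S) :=
  (hS.mul_left (‖X‖ ^ 2)).of_nonneg_of_le (fun _ => by positivity) fun i => by
    simpa [mul_pow] using pow_le_pow_left₀ (norm_nonneg _) (X.le_opNorm (S (b i))) 2

theorem adjoint (hS : IsHilbertSchmidt b S) : IsHilbertSchmidt b (adjoint S) := by
  let f : ι × ι → ℝ := fun p => ‖⟪b p.2, S (b p.1)⟫_ℂ‖ ^ 2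
  have hf : Summable f := (summable_prod_of_nonneg fun _ => by positivity).2
    ⟨fun i => (b.hasSum_norm_inner_sq (S (b i))).summable,
      hS.congr fun i => (b.hasSum_norm_inner_sq (S (b i))).tsum_eq.symm⟩
  refine ((summable_prod_of_nonneg fun _ => by positivity).1 hf.prod_symm).2.congr fun j => ?_
  rw [← (b.hasSum_norm_inner_sq (ContinuousLinearMap.adjoint S (b j))).tsum_eq]
  exact tsum_congr fun i => by simp [f, adjoint_inner_right, norm_inner_symm]

theorem comp_clm (hS : IsHilbertSchmidt b S) (X : H →L[ℂ] H) : IsHilbertSchmidt b (S ∘L X) := by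
  simpa [adjoint_comp] using (hS.adjoint.clm_comp (ContinuousLinearMap.adjoint X)).adjoint

theorem sub (hS : IsHilbertSchmidt b S) (hS' : IsHilbertSchmidt b S') :
    IsHilbertSchmidt b (S - S') :=
  ((hS.add hS').mul_left 2).of_nonneg_of_le (fun _ => by positivity) fun i => by
    have := norm_sub_le (S (b i)) (S' (b i))
    simp only [sub_apply]
    nlinarith [norm_nonneg (S (b i) - S' (b i)), sq_nonneg (‖S (b i)‖ - ‖S' (b i)‖)]

theorem summable_re_inner (hS : IsHilbertSchmidt b S) (hS' : IsHilbertSchmidt b S') :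
    Summable fun i => (⟪S (b i), S' (b i)⟫_ℂ).re :=
  .of_norm_bounded ((hS.add hS').div_const 2) fun i => by
    have := (Complex.abs_re_le_norm ⟪S (b i), S' (b i)⟫_ℂ).trans (norm_inner_le_norm _ _)
    rw [Real.norm_eq_abs]
    nlinarith [sq_nonneg (‖S (b i)‖ - ‖S' (b i)‖)]

theorem summable_re_inner_apply (hS : IsHilbertSchmidt b S) (hS' : IsHilbertSchmidt b S')
    (J : H →L[ℂ] H) : Summable fun i => (⟪J (S (b i)), S' (b i)⟫_ℂ).re :=
  (hS.clm_comp J).summable_re_inner hS'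

end IsHilbertSchmidt

theorem IsTraceClass.isHilbertSchmidt {b : HilbertBasis ι ℂ H} {S : H →L[ℂ] H}
    (hS : IsTraceClass b S) : IsHilbertSchmidt b S := by
  obtain ⟨S₁, S₂, -, hS₂, rfl⟩ := hS
  exact hS₂.clm_comp S₁

theorem isHilbertSchmidt_rankOne (b : HilbertBasis ι ℂ H) (x y : H) :
    IsHilbertSchmidt b (rankOne ℂ x y) :=
  ((b.hasSum_norm_inner_sq y).summable.mul_right (‖x‖ ^ 2)).congr fun i => by
    rw [rankOne_apply, norm_smul, mul_pow, norm_inner_symm]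

theorem isTraceClass_rankOne (b : HilbertBasis ι ℂ H) (x : H) (i : ι) :
    IsTraceClass b (rankOne ℂ x (b i)) :=
  ⟨_, _, isHilbertSchmidt_rankOne b x (b i), isHilbertSchmidt_rankOne b (b i) (b i), by
    rw [rankOne_comp_rankOne, inner_self_eq_norm_sq_to_K, b.orthonormal.1 i]
    simp⟩

end HilbertSchmidt

section KreinPairing

variable {ι : Type*} {J : H →L[ℂ] H} {b : HilbertBasis ι ℂ H}

def jPairing (J : H →L[ℂ] H) (b : HilbertBasis ι ℂ H) (P Q : H →L[ℂ] H) : ℝ :=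
  ∑' i, (⟪J (P (b i)), Q (b i)⟫_ℂ).re

theorem apply_apply_of_comp_eq_one (hJ2 : J ∘L J = 1) (x : H) : J (J x) = x :=
  DFunLike.congr_fun hJ2 x

theorem inner_apply_kadj (hJ2 : J ∘L J = 1) (Q : H →L[ℂ] H) (u v : H) :
    ⟪J (kadj J Q u), v⟫_ℂ = ⟪J u, Q v⟫_ℂ := by
  rw [kadj, comp_apply, comp_apply, apply_apply_of_comp_eq_one hJ2, adjoint_inner_left]

theorem trJ_kadj_comp (hJ2 : J ∘L J = 1) (P Q : H →L[ℂ] H) :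
    trJ J b (kadj J Q ∘L P) = jPairing J b P Q :=
  tsum_congr fun i => by rw [comp_apply, inner_apply_kadj hJ2]

theorem IsSelfAdjoint.re_inner_apply_add_add (hJ : IsSelfAdjoint J) (u v : H) :
    (⟪J (u + v), u + v⟫_ℂ).re =
      (⟪J u, u⟫_ℂ).re + (⟪J v, v⟫_ℂ).re + 2 * (⟪J u, v⟫_ℂ).re := by
  have hvu : ⟪J v, u⟫_ℂ = starRingEnd ℂ ⟪J u, v⟫_ℂ := by
    rw [inner_conj_symm, ← adjoint_inner_left, hJ.adjoint_eq]
  rw [map_add, inner_add_left, inner_add_right, inner_add_right, hvu]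
  simp only [Complex.add_re, Complex.conj_re]
  ring

theorem jPairing_add_add (hJ : IsSelfAdjoint J) {P Q : H →L[ℂ] H}
    (hP : IsHilbertSchmidt b P) (hQ : IsHilbertSchmidt b Q) :
    jPairing J b (P + Q) (P + Q) =
      jPairing J b P P + jPairing J b Q Q + 2 * jPairing J b P Q := by
  simp only [jPairing, add_apply, hJ.re_inner_apply_add_add]
  have hPP := hP.summable_re_inner_apply hP J
  have hQQ := hQ.summable_re_inner_apply hQ J
  rw [(hPP.add hQQ).tsum_add ((hP.summable_re_inner_apply hQ J).mul_left 2), hPP.tsum_add hQQ,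
    tsum_mul_left]

theorem jPairing_add_smul_comp (hJ2 : J ∘L J = 1) {P P' T V : H →L[ℂ] H} (Z : H →L[ℂ] H)
    (hP : IsHilbertSchmidt b P) (hP' : IsHilbertSchmidt b P')
    (hTZ : IsHilbertSchmidt b (T ∘L Z)) (hVZ : IsHilbertSchmidt b (V ∘L Z)) (ρ : ℝ) :
    jPairing J b P (T ∘L Z) + ρ * jPairing J b P' (V ∘L Z) =
      jPairing J b (kadj J T ∘L P + (ρ : ℂ) • (kadj J V ∘L P')) Z := by
  rw [jPairing, jPairing, ← tsum_mul_left, ← Summable.tsum_add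
    (hP.summable_re_inner_apply hTZ J) ((hP'.summable_re_inner_apply hVZ J).mul_left ρ)]
  refine tsum_congr fun i => ?_
  simp only [add_apply, smul_apply, comp_apply, map_add, map_smul, inner_add_left,
    inner_smul_left, inner_apply_kadj hJ2, Complex.conj_ofReal, Complex.add_re,
    Complex.re_ofReal_mul]

theorem jPairing_ofReal_smul_left (P Q : H →L[ℂ] H) (t : ℝ) :
    jPairing J b ((t : ℂ) • P) Q = t * jPairing J b P Q := by
  simp only [jPairing, ← tsum_mul_left, smul_apply, map_smul, inner_smul_left,
    Complex.conj_ofReal, Complex.re_ofReal_mul]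

theorem jPairing_ofReal_smul_right (P Q : H →L[ℂ] H) (t : ℝ) :
    jPairing J b P ((t : ℂ) • Q) = t * jPairing J b P Q := by
  simp only [jPairing, ← tsum_mul_left, smul_apply, inner_smul_right, Complex.re_ofReal_mul]

theorem jPairing_rankOne (E : H →L[ℂ] H) (w : H) (i : ι) :
    jPairing J b E (rankOne ℂ w (b i)) = (⟪J (E (b i)), w⟫_ℂ).re := by
  classical
  rw [jPairing, tsum_eq_single i fun j hj => ?_]
  · simp [rankOne_apply, inner_self_eq_norm_sq_to_K, b.orthonormal.1 i]
  · simp [rankOne_apply, orthonormal_iff_ite.1 b.orthonormal i j, Ne.symm hj]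

theorem eq_zero_of_forall_re_inner_apply (hJ2 : J ∘L J = 1) {v : H}
    (h : ∀ w, (⟪J v, w⟫_ℂ).re = 0) : v = 0 := by
  have hJv : ‖J v‖ ^ 2 = 0 := by
    rw [← inner_self_eq_norm_sq (𝕜 := ℂ)]
    exact h (J v)
  rw [← apply_apply_of_comp_eq_one hJ2 v, norm_eq_zero.1 (pow_eq_zero_iff two_ne_zero |>.1 hJv),
    map_zero]

end KreinPairing

section Smoothing

variable {ι : Type*} {J : H →L[ℂ] H} {b : HilbertBasis ι ℂ H} {T V B₀ : H →L[ℂ] H} {ρ : ℝ}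

def normalOp (J T V : H →L[ℂ] H) (ρ : ℝ) : H →L[ℂ] H :=
  kadj J T ∘L T + (ρ : ℂ) • (kadj J V ∘L V)

def smoothingCost (J : H →L[ℂ] H) (b : HilbertBasis ι ℂ H) (T V B₀ : H →L[ℂ] H) (ρ : ℝ)
    (X : H →L[ℂ] H) : ℝ :=
  trJ J b (kadj J (T ∘L X) ∘L (T ∘L X)) + ρ * trJ J b (kadj J (V ∘L X - B₀) ∘L (V ∘L X - B₀))

theorem smoothingCost_add (hJ : IsSelfAdjoint J) (hJ2 : J ∘L J = 1)
    (hT : IsHilbertSchmidt b T) (hV : IsHilbertSchmidt b V) (hB : IsHilbertSchmidt b B₀)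
    (ρ : ℝ) (X Z : H →L[ℂ] H) :
    smoothingCost J b T V B₀ ρ (X + Z) = smoothingCost J b T V B₀ ρ X +
      jPairing J b (normalOp J T V ρ ∘L Z) Z +
      2 * jPairing J b (normalOp J T V ρ ∘L X - (ρ : ℂ) • (kadj J V ∘L B₀)) Z := by
  have hTX := hT.comp_clm X
  have hTZ := hT.comp_clm Z
  have hVZ := hV.comp_clm Z
  have hD := (hV.comp_clm X).sub hB
  have hquad := jPairing_add_smul_comp hJ2 Z hTZ hVZ hTZ hVZ ρ
  have hcross := jPairing_add_smul_comp hJ2 Z hTX hD hTZ hVZ ρ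
  rw [show kadj J T ∘L (T ∘L Z) + (ρ : ℂ) • (kadj J V ∘L (V ∘L Z)) = normalOp J T V ρ ∘L Z by
    ext; simp [normalOp]] at hquad
  rw [show kadj J T ∘L (T ∘L X) + (ρ : ℂ) • (kadj J V ∘L (V ∘L X - B₀)) =
      normalOp J T V ρ ∘L X - (ρ : ℂ) • (kadj J V ∘L B₀) by
    ext; simp [normalOp, sub_eq_add_neg, add_assoc]] at hcross
  simp only [smoothingCost, trJ_kadj_comp hJ2]
  rw [comp_add, comp_add, show V ∘L X + V ∘L Z - B₀ = (V ∘L X - B₀) + V ∘L Z by abel]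
  rw [jPairing_add_add hJ hTX hTZ, jPairing_add_add hJ hD hVZ, ← hquad, ← hcross]
  ring

theorem smoothingCost_le_of_normalOp_comp_eq (hJ : IsSelfAdjoint J) (hJ2 : J ∘L J = 1)
    (hT : IsHilbertSchmidt b T) (hV : IsHilbertSchmidt b V) (hB : IsHilbertSchmidt b B₀)
    (hA : ∀ x, 0 ≤ (⟪J (normalOp J T V ρ x), x⟫_ℂ).re) {X₀ : H →L[ℂ] H}
    (hX₀ : normalOp J T V ρ ∘L X₀ = (ρ : ℂ) • (kadj J V ∘L B₀)) (X : H →L[ℂ] H) :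
    smoothingCost J b T V B₀ ρ X₀ ≤ smoothingCost J b T V B₀ ρ X := by
  have h := smoothingCost_add hJ hJ2 hT hV hB ρ X₀ (X - X₀)
  rw [add_sub_cancel, hX₀, sub_self] at h
  have hq : 0 ≤ jPairing J b (normalOp J T V ρ ∘L (X - X₀)) (X - X₀) :=
    tsum_nonneg fun i => hA _
  have h0 : jPairing J b 0 (X - X₀) = 0 := by simp [jPairing]
  linarith

theorem jPairing_normalOp_comp_sub_eq_zero (hJ : IsSelfAdjoint J) (hJ2 : J ∘L J = 1)
    (hT : IsHilbertSchmidt b T) (hV : IsHilbertSchmidt b V) (hB : IsHilbertSchmidt b B₀)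
    {X₀ : H →L[ℂ] H} (hX₀ : ∀ X, smoothingCost J b T V B₀ ρ X₀ ≤ smoothingCost J b T V B₀ ρ X)
    (Z : H →L[ℂ] H) :
    jPairing J b (normalOp J T V ρ ∘L X₀ - (ρ : ℂ) • (kadj J V ∘L B₀)) Z = 0 := by
  set q := jPairing J b (normalOp J T V ρ ∘L Z) Z
  set c := jPairing J b (normalOp J T V ρ ∘L X₀ - (ρ : ℂ) • (kadj J V ∘L B₀)) Z
  have hquad : ∀ t : ℝ, 0 ≤ q * (t * t) + 2 * c * t + 0 := fun t => by
    have h := smoothingCost_add hJ hJ2 hT hV hB ρ X₀ ((t : ℂ) • Z)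
    rw [comp_smul, jPairing_ofReal_smul_left, jPairing_ofReal_smul_right,
      jPairing_ofReal_smul_right] at h
    nlinarith [hX₀ (X₀ + (t : ℂ) • Z)]
  have hc := discrim_le_zero hquad
  rw [discrim] at hc
  exact pow_eq_zero_iff two_ne_zero |>.1 (by nlinarith [sq_nonneg c])

theorem normalOp_apply_eq_of_forall_le_rankOne (hJ : IsSelfAdjoint J) (hJ2 : J ∘L J = 1)
    (hT : IsHilbertSchmidt b T) (hV : IsHilbertSchmidt b V) {x : H} {i : ι} {X₀ : H →L[ℂ] H}
    (hX₀ : ∀ X, smoothingCost J b T V (rankOne ℂ x (b i)) ρ X₀ ≤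
      smoothingCost J b T V (rankOne ℂ x (b i)) ρ X) :
    normalOp J T V ρ (X₀ (b i)) = (ρ : ℂ) • kadj J V x := by
  have hres : (normalOp J T V ρ ∘L X₀ - (ρ : ℂ) • (kadj J V ∘L rankOne ℂ x (b i))) (b i) = 0 :=
    eq_zero_of_forall_re_inner_apply hJ2 fun w => by
      rw [← jPairing_rankOne]
      exact jPairing_normalOp_comp_sub_eq_zero hJ hJ2 hT hV
        (isHilbertSchmidt_rankOne b x (b i)) hX₀ _
  rw [sub_apply, sub_eq_zero] at hres
  simpa [inner_self_eq_norm_sq_to_K, b.orthonormal.1 i] using hres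

end Smoothing

theorem stmt18_general {ι : Type*}
    (J : H →L[ℂ] H) (hJsa : IsSelfAdjoint J) (hJ2 : J ∘L J = 1)
    (b : HilbertBasis ι ℂ H)
    (T V : H →L[ℂ] H) (ρ : ℝ) (hρ : ρ ≠ 0)
    (hTtc : IsTraceClass b T) (hVtc : IsTraceClass b V)
    (hpos : KreinPositive J (kadj J T ∘L T + (ρ : ℂ) • (kadj J V ∘L V))) :
    (∀ B₀ : H →L[ℂ] H, IsTraceClass b B₀ →
        ∃ X₀ : H →L[ℂ] H, ∀ X : H →L[ℂ] H,
          trJ J b (kadj J (T ∘L X₀) ∘L (T ∘L X₀)) +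
              ρ * trJ J b (kadj J (V ∘L X₀ - B₀) ∘L (V ∘L X₀ - B₀)) ≤
            trJ J b (kadj J (T ∘L X) ∘L (T ∘L X)) +
              ρ * trJ J b (kadj J (V ∘L X - B₀) ∘L (V ∘L X - B₀))) ↔
      (∀ x : H, ∃ y : H,
        (kadj J T ∘L T + (ρ : ℂ) • (kadj J V ∘L V)) y = kadj J V x) := by
  have hT := hTtc.isHilbertSchmidt
  have hV := hVtc.isHilbertSchmidt
  constructor
  · intro hmin x
    rcases isEmpty_or_nonempty ι with hι | ⟨⟨i⟩⟩
    · exact ⟨0, by rw [b.eq_zero_of_isEmpty x, map_zero, map_zero]⟩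
    obtain ⟨X₀, hX₀⟩ := hmin _ (isTraceClass_rankOne b x i)
    refine ⟨(ρ : ℂ)⁻¹ • X₀ (b i), ?_⟩
    change normalOp J T V ρ ((ρ : ℂ)⁻¹ • X₀ (b i)) = _
    rw [map_smul, normalOp_apply_eq_of_forall_le_rankOne hJsa hJ2 hT hV hX₀, smul_smul,
      inv_mul_cancel₀ (Complex.ofReal_ne_zero.2 hρ), one_smul]
  · intro hran B₀ hB₀
    obtain ⟨X₀, hX₀⟩ := (normalOp J T V ρ).exists_comp_eq_of_range_le
      ((ρ : ℂ) • (kadj J V ∘L B₀)) (by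
        rintro _ ⟨u, rfl⟩
        obtain ⟨y, hy⟩ := hran (B₀ u)
        refine ⟨(ρ : ℂ) • y, ?_⟩
        change normalOp J T V ρ ((ρ : ℂ) • y) = (ρ : ℂ) • kadj J V (B₀ u)
        rw [map_smul]
        exact congrArg _ hy)
    exact ⟨X₀, smoothingCost_le_of_normalOp_comp_eq hJsa hJ2 hT hV hB₀.isHilbertSchmidt hpos.2 hX₀⟩

/-- for trace-class `T, V` with `T^#T + ρV^#V` Krein-positive, the
indefinite operator smoothing problem has a solution for every trace-class `B₀` iff
`ran V^# ⊆ ran(T^#T + ρV^#V)`. -/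
theorem stmt18 {ι : Type*}
    [TopologicalSpace.SeparableSpace H]
    (J : H →L[ℂ] H) (hJsa : IsSelfAdjoint J) (hJ2 : J ∘L J = 1)
    (b : HilbertBasis ι ℂ H)
    (T V : H →L[ℂ] H) (ρ : ℝ) (hρ : ρ ≠ 0)
    (hTtc : IsTraceClass b T) (hVtc : IsTraceClass b V)
    (hpos : KreinPositive J (kadj J T ∘L T + (ρ : ℂ) • (kadj J V ∘L V))) :
    (∀ B₀ : H →L[ℂ] H, IsTraceClass b B₀ →
        ∃ X₀ : H →L[ℂ] H, ∀ X : H →L[ℂ] H,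
          trJ J b (kadj J (T ∘L X₀) ∘L (T ∘L X₀)) +
              ρ * trJ J b (kadj J (V ∘L X₀ - B₀) ∘L (V ∘L X₀ - B₀)) ≤
            trJ J b (kadj J (T ∘L X) ∘L (T ∘L X)) +
              ρ * trJ J b (kadj J (V ∘L X - B₀) ∘L (V ∘L X - B₀))) ↔
      (∀ x : H, ∃ y : H,
        (kadj J T ∘L T + (ρ : ℂ) • (kadj J V ∘L V)) y = kadj J V x) :=
  stmt18_general J hJsa hJ2 b T V ρ hρ hTtc hVtc hpos
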